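/- Fix 0 < r < 1, an integer δ, and points p_1, …, p_e ∈ 𝔸_r (e ≥ 2, not necessarily distinct). Then the sequence of partial products f_N(z) = z^{−δ} B_0(z) ∏_{j=1}^N B_j(z)B_{−j}(z) converges uniformly on the closed annulus Ā_r = {r ≤ |z| ≤ 1} to a limit function f_∞, which is continuous on Ā_r and holomorphic on 𝔸_r. -/

import Mathlib

open Finset Complex Filter

/-- The Blaschke-type factor `B_j` associated to `r ∈ (0,1)` and points
`p 1, …, p e` of the annulus `𝔸_r`. -/
noncomputable def annulusBlaschkeFactor (r : ℝ) {e : ℕ} (p : Fin e → ℂ) (j : ℤ)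
    (z : ℂ) : ℂ :=
  (∏ k, (1 - (starRingEnd ℂ) (p k) * (r : ℂ) ^ (2 * j)) /
      (1 - p k * (r : ℂ) ^ (2 * j))) *
    ∏ k, (z - p k * (r : ℂ) ^ (2 * j)) /
      (1 - (starRingEnd ℂ) (p k) * (r : ℂ) ^ (2 * j) * z)

/-- The partial product `f_N(z) = z^{−δ} B₀(z) ∏_{j=1}^N B_j(z) B_{−j}(z)`. -/
noncomputable def annulusPartialProduct (r : ℝ) {e : ℕ} (p : Fin e → ℂ) (δ : ℤ)
    (N : ℕ) (z : ℂ) : ℂ :=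
  z ^ (-δ) * annulusBlaschkeFactor r p 0 z *
    ∏ j ∈ Finset.Icc 1 N, (annulusBlaschkeFactor r p (j : ℤ) z *
      annulusBlaschkeFactor r p (-(j : ℤ)) z)

/-!
Write `B_j B_{-j}` as a product over the points `a = p_k` of the pairs
`b(a, q, z) b(a, q⁻¹, z)`, `q = r^{2j}`, of Blaschke-type factors. Clearing denominators, such a
pair is a quotient of two polynomials in `q` that agree at `q = 0` and whose denominator does not
vanish for `|q| ≤ r²` and `z` in the closed annulus; by compactness the pair is `1 + O(q)` there.
Hence `sup |B_j B_{-j} - 1| = O(r^{2j})` on the closed annulus, and the Weierstrass test for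
products of continuous functions on a compact set gives uniform convergence. Uniform limits of
continuous functions are continuous, and locally uniform limits of holomorphic functions are
holomorphic.
-/

open scoped ComplexConjugate

lemma Real.exp_sub_one_le_mul_exp (x : ℝ) : Real.exp x - 1 ≤ x * Real.exp x := by
  have h := mul_le_mul_of_nonneg_right (Real.one_sub_le_exp_neg x) (Real.exp_pos x).le
  rw [← Real.exp_add, neg_add_cancel, Real.exp_zero] at h
  linarith

lemma TendstoUniformlyOn.mul_left_of_norm_le {ι α R : Type*} [SeminormedRing R]
    {F : ι → α → R} {f g : α → R} {l : Filter ι} {s : Set α} {C : ℝ}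
    (h : TendstoUniformlyOn F f l s) (hg : ∀ x ∈ s, ‖g x‖ ≤ C) :
    TendstoUniformlyOn (fun i x => g x * F i x) (fun x => g x * f x) l s := by
  rw [Metric.tendstoUniformlyOn_iff] at h ⊢
  intro ε hε
  have hC : 0 < |C| + 1 := by positivity
  filter_upwards [h (ε / (|C| + 1)) (by positivity)] with i hi x hx
  rw [dist_eq_norm, ← mul_sub]
  calc ‖g x * (f x - F i x)‖ ≤ ‖g x‖ * ‖f x - F i x‖ := norm_mul_le _ _
    _ < (|C| + 1) * (ε / (|C| + 1)) :=
      mul_lt_mul' ((hg x hx).trans ((le_abs_self C).trans (lt_add_one _).le))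
        (by rw [← dist_eq_norm]; exact hi x hx) (norm_nonneg _) hC
    _ = ε := mul_div_cancel₀ ε hC.ne'

lemma zpow_two_mul_notMem_Ioo {r : ℝ} (hr0 : 0 < r) (hr1 : r < 1) (m : ℤ) :
    r ^ (2 * m) ∉ Set.Ioo (r ^ 2) 1 := by
  rintro ⟨hlow, hup⟩
  rcases le_or_gt m 0 with hm | hm
  · exact (one_le_zpow_of_nonpos₀ hr0 hr1.le (by omega)).not_gt hup
  · have h := zpow_le_zpow_right_of_le_one₀ hr0 hr1.le (show (2 : ℤ) ≤ 2 * m by omega)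
    rw [zpow_ofNat] at h
    exact h.not_gt hlow

def closedAnnulus (r : ℝ) : Set ℂ := {z | r ≤ ‖z‖ ∧ ‖z‖ ≤ 1}

lemma isCompact_closedAnnulus (r : ℝ) : IsCompact (closedAnnulus r) :=
  (isCompact_closedBall (0 : ℂ) 1).of_isClosed_subset
    ((isClosed_le continuous_const continuous_norm).inter
      (isClosed_le continuous_norm continuous_const))
    fun _ hz => mem_closedBall_zero_iff.2 hz.2

lemma zero_notMem_closedAnnulus {r : ℝ} (hr0 : 0 < r) : (0 : ℂ) ∉ closedAnnulus r :=
  fun h => (norm_zero (E := ℂ) ▸ h.1).not_gt hr0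

noncomputable def blaschkeTerm (a q z : ℂ) : ℂ :=
  (1 - conj a * q) / (1 - a * q) * ((z - a * q) / (1 - conj a * q * z))

lemma annulusBlaschkeFactor_eq_prod (r : ℝ) {e : ℕ} (p : Fin e → ℂ) (j : ℤ) (z : ℂ) :
    annulusBlaschkeFactor r p j z = ∏ k, blaschkeTerm (p k) ((r : ℂ) ^ (2 * j)) z :=
  (prod_mul_distrib ..).symm

lemma annulusBlaschkeFactor_mul_neg (r : ℝ) {e : ℕ} (p : Fin e → ℂ) (j : ℤ) (z : ℂ) :
    annulusBlaschkeFactor r p j z * annulusBlaschkeFactor r p (-j) z =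
      ∏ k, blaschkeTerm (p k) ((r : ℂ) ^ (2 * j)) z *
        blaschkeTerm (p k) ((r : ℂ) ^ (2 * j))⁻¹ z := by
  rw [annulusBlaschkeFactor_eq_prod, annulusBlaschkeFactor_eq_prod, ← prod_mul_distrib, mul_neg,
    zpow_neg]

noncomputable def blaschkePairNumerator (a q z : ℂ) : ℂ :=
  (a * (1 + conj a ^ 2 * z ^ 2) + conj a * z * (1 + a ^ 2) - conj a * (z ^ 2 + a ^ 2)
      - a * z * (1 + conj a ^ 2)) * (1 + q ^ 2)
    + ((1 + conj a ^ 2) * (z ^ 2 + a ^ 2) - (1 + a ^ 2) * (1 + conj a ^ 2 * z ^ 2)) * q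

noncomputable def blaschkePairDenominator (a q z : ℂ) : ℂ :=
  (1 - a * q) * (q - a) * (1 - conj a * q * z) * (q - conj a * z)

/-- The pair is `N(q) / D(q)` with `D = blaschkePairDenominator a q z`, where `N` and `D` are
quartic polynomials in `q` that agree at `q = 0` and whose difference is palindromic; hence
`N - D = q * blaschkePairNumerator a q z`. -/
lemma blaschkeTerm_mul_inv_sub_one {a q z : ℂ} (hq : q ≠ 0)
    (hD : blaschkePairDenominator a q z ≠ 0) :
    blaschkeTerm a q z * blaschkeTerm a q⁻¹ z - 1 =
      q * (blaschkePairNumerator a q z / blaschkePairDenominator a q z) := by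
  obtain ⟨⟨⟨h₁, h₂⟩, h₃⟩, h₄⟩ := by
    simpa only [blaschkePairDenominator, mul_ne_zero_iff] using hD
  have h₁' : 1 - q * a ≠ 0 := by rwa [mul_comm]
  simp only [blaschkeTerm, blaschkePairNumerator, blaschkePairDenominator]
  field_simp
  ring

lemma blaschkePairDenominator_ne_zero {r : ℝ} (hr0 : 0 < r) (hr1 : r < 1) {a q z : ℂ}
    (har : r < ‖a‖) (ha1 : ‖a‖ ≤ 1) (hq : ‖q‖ ≤ r ^ 2) (hz : z ∈ closedAnnulus r) :
    blaschkePairDenominator a q z ≠ 0 := by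
  obtain ⟨hz1, hz2⟩ := hz
  have hr2 : r ^ 2 < r := by nlinarith
  have hconj : ‖conj a‖ = ‖a‖ := RCLike.norm_conj a
  have h₁ : ‖a * q‖ < ‖(1 : ℂ)‖ := by rw [norm_mul, norm_one]; nlinarith [norm_nonneg q]
  have h₂ : ‖q‖ < ‖a‖ := by linarith
  have h₃ : ‖conj a * q * z‖ < ‖(1 : ℂ)‖ := by
    rw [norm_mul, norm_mul, norm_one, hconj]
    nlinarith [norm_nonneg q, norm_nonneg z, mul_nonneg (norm_nonneg a) (norm_nonneg q)]
  have h₄ : ‖q‖ < ‖conj a * z‖ := by rw [norm_mul, hconj]; nlinarith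
  exact mul_ne_zero (mul_ne_zero (mul_ne_zero (sub_ne_zero.2 (ne_of_apply_ne norm h₁.ne'))
    (sub_ne_zero.2 (ne_of_apply_ne norm h₂.ne))) (sub_ne_zero.2 (ne_of_apply_ne norm h₃.ne')))
    (sub_ne_zero.2 (ne_of_apply_ne norm h₄.ne))

lemma exists_norm_blaschkeTerm_mul_inv_sub_one_le {r : ℝ} (hr0 : 0 < r) (hr1 : r < 1) {a : ℂ}
    (har : r < ‖a‖) (ha1 : ‖a‖ ≤ 1) :
    ∃ C, 0 ≤ C ∧ ∀ q : ℂ, q ≠ 0 → ‖q‖ ≤ r ^ 2 → ∀ z ∈ closedAnnulus r,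
      ‖blaschkeTerm a q z * blaschkeTerm a q⁻¹ z - 1‖ ≤ C * ‖q‖ := by
  have hden : ∀ w ∈ Metric.closedBall (0 : ℂ) (r ^ 2) ×ˢ closedAnnulus r,
      blaschkePairDenominator a w.1 w.2 ≠ 0 := fun w hw =>
    blaschkePairDenominator_ne_zero hr0 hr1 har ha1 (mem_closedBall_zero_iff.1 hw.1) hw.2
  obtain ⟨C, hC⟩ := ((isCompact_closedBall _ _).prod
    (isCompact_closedAnnulus r)).exists_bound_of_continuousOn
    ((by unfold blaschkePairNumerator; fun_prop : Continuous fun w : ℂ × ℂ =>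
      blaschkePairNumerator a w.1 w.2).continuousOn.div
      (by unfold blaschkePairDenominator; fun_prop : Continuous fun w : ℂ × ℂ =>
        blaschkePairDenominator a w.1 w.2).continuousOn hden)
  refine ⟨max C 0, le_max_right _ _, fun q hq0 hq z hz => ?_⟩
  rw [blaschkeTerm_mul_inv_sub_one hq0 (blaschkePairDenominator_ne_zero hr0 hr1 har ha1 hq hz),
    norm_mul, mul_comm]
  exact mul_le_mul_of_nonneg_right
    ((hC (q, z) ⟨mem_closedBall_zero_iff.2 hq, hz⟩).trans (le_max_left _ _)) (norm_nonneg q)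

section Annulus

variable {r : ℝ} {e : ℕ} {p : Fin e → ℂ}

lemma one_sub_conj_mul_zpow_mul_ne_zero (hr0 : 0 < r) (hr1 : r < 1) {a : ℂ}
    (ha : r < ‖a‖ ∧ ‖a‖ < 1) (j : ℤ) {z : ℂ} (hz : z ∈ closedAnnulus r) :
    1 - conj a * (r : ℂ) ^ (2 * j) * z ≠ 0 := by
  intro h
  have hnorm := congrArg norm (sub_eq_zero.1 h)
  rw [norm_one, norm_mul, norm_mul, RCLike.norm_conj, norm_zpow, norm_real,
    Real.norm_of_nonneg hr0.le] at hnorm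
  have hx : ‖a‖ * ‖z‖ = r ^ (2 * -j) := by
    rw [mul_neg, zpow_neg]
    exact eq_inv_of_mul_eq_one_left (by linear_combination -hnorm)
  refine zpow_two_mul_notMem_Ioo hr0 hr1 (-j) (hx ▸ ⟨?_, ?_⟩) <;>
    nlinarith [hz.1, hz.2, norm_nonneg a]

lemma differentiableOn_annulusBlaschkeFactor (hr0 : 0 < r) (hr1 : r < 1)
    (hp : ∀ k, r < ‖p k‖ ∧ ‖p k‖ < 1) (j : ℤ) :
    DifferentiableOn ℂ (annulusBlaschkeFactor r p j) (closedAnnulus r) :=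
  (differentiableOn_const _).mul <| DifferentiableOn.fun_finsetProd fun k _ =>
    (differentiableOn_id.sub (differentiableOn_const _)).div
      ((differentiableOn_const _).sub ((differentiableOn_const _).mul differentiableOn_id))
      fun _ hz => one_sub_conj_mul_zpow_mul_ne_zero hr0 hr1 (hp k) j hz

lemma differentiableOn_annulusPartialProduct (hr0 : 0 < r) (hr1 : r < 1)
    (hp : ∀ k, r < ‖p k‖ ∧ ‖p k‖ < 1) (δ : ℤ) (N : ℕ) :
    DifferentiableOn ℂ (annulusPartialProduct r p δ N) (closedAnnulus r) :=
  ((differentiableOn_zpow _ _ (Or.inl (zero_notMem_closedAnnulus hr0))).mul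
    (differentiableOn_annulusBlaschkeFactor hr0 hr1 hp 0)).mul <|
    DifferentiableOn.fun_finsetProd fun j _ =>
      (differentiableOn_annulusBlaschkeFactor hr0 hr1 hp j).mul
        (differentiableOn_annulusBlaschkeFactor hr0 hr1 hp (-j))

lemma annulusPartialProduct_eq_mul_prod_range (r : ℝ) (p : Fin e → ℂ) (δ : ℤ) (N : ℕ) (z : ℂ) :
    annulusPartialProduct r p δ N z = z ^ (-δ) * annulusBlaschkeFactor r p 0 z *
      ∏ n ∈ range N, (1 + (annulusBlaschkeFactor r p ((n + 1 : ℕ) : ℤ) z *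
        annulusBlaschkeFactor r p (-((n + 1 : ℕ) : ℤ)) z - 1)) := by
  simp only [add_sub_cancel]
  rw [annulusPartialProduct, range_eq_Ico, prod_Ico_add' (fun j : ℕ =>
    annulusBlaschkeFactor r p j z * annulusBlaschkeFactor r p (-(j : ℤ)) z), zero_add,
    Ico_add_one_right_eq_Icc]

lemma exists_norm_annulusBlaschkeFactor_mul_neg_sub_one_le (hr0 : 0 < r) (hr1 : r < 1)
    (hp : ∀ k, r < ‖p k‖ ∧ ‖p k‖ < 1) :
    ∃ C, ∀ n : ℕ, ∀ z ∈ closedAnnulus r,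
      ‖annulusBlaschkeFactor r p ((n + 1 : ℕ) : ℤ) z *
        annulusBlaschkeFactor r p (-((n + 1 : ℕ) : ℤ)) z - 1‖ ≤ C * (r ^ 2) ^ n := by
  choose C hC0 hC using fun k => exists_norm_blaschkeTerm_mul_inv_sub_one_le hr0 hr1 (hp k).1
    (hp k).2.le
  set S := ∑ k, C k
  have hS : 0 ≤ S := sum_nonneg fun k _ => hC0 k
  refine ⟨S * Real.exp S * r ^ 2, fun n z hz => ?_⟩
  set q : ℂ := (r : ℂ) ^ (2 * ((n + 1 : ℕ) : ℤ))
  have hq : ‖q‖ = (r ^ 2) ^ (n + 1) := by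
    rw [norm_zpow, norm_real, Real.norm_of_nonneg hr0.le, zpow_mul, zpow_ofNat, zpow_natCast]
  have hq0 : q ≠ 0 := zpow_ne_zero _ (ofReal_ne_zero.2 hr0.ne')
  have hr2 : r ^ 2 ≤ 1 := pow_le_one₀ hr0.le hr1.le
  have hqr : ‖q‖ ≤ r ^ 2 := hq ▸ pow_le_of_le_one (by positivity) hr2 n.succ_ne_zero
  have hsum : ∑ k, ‖blaschkeTerm (p k) q z * blaschkeTerm (p k) q⁻¹ z - 1‖ ≤ S * ‖q‖ := by
    rw [sum_mul]
    exact sum_le_sum fun k _ => hC k q hq0 hqr z hz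
  rw [annulusBlaschkeFactor_mul_neg]
  calc ‖∏ k, blaschkeTerm (p k) q z * blaschkeTerm (p k) q⁻¹ z - 1‖
      = ‖∏ k, (1 + (blaschkeTerm (p k) q z * blaschkeTerm (p k) q⁻¹ z - 1)) - 1‖ := by
        simp only [add_sub_cancel]
    _ ≤ Real.exp (S * ‖q‖) - 1 := (norm_prod_one_add_sub_one_le _ _).trans
        (by gcongr)
    _ ≤ S * ‖q‖ * Real.exp (S * ‖q‖) := Real.exp_sub_one_le_mul_exp _
    _ ≤ S * ‖q‖ * Real.exp S := by
        gcongr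
        exact mul_le_of_le_one_right hS (hqr.trans hr2)
    _ = S * Real.exp S * r ^ 2 * (r ^ 2) ^ n := by rw [hq, pow_succ]; ring

end Annulus

theorem annulusPartialProduct_tendstoUniformly_general (r : ℝ) (hr0 : 0 < r) (hr1 : r < 1)
    (e : ℕ) (p : Fin e → ℂ)
    (hp : ∀ k, r < ‖p k‖ ∧ ‖p k‖ < 1) (δ : ℤ) :
    ∃ finf : ℂ → ℂ,
      TendstoUniformlyOn (fun N z => annulusPartialProduct r p δ N z) finf atTop
        {z : ℂ | r ≤ ‖z‖ ∧ ‖z‖ ≤ 1} ∧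
      ContinuousOn finf {z : ℂ | r ≤ ‖z‖ ∧ ‖z‖ ≤ 1} ∧
      DifferentiableOn ℂ finf {z : ℂ | r < ‖z‖ ∧ ‖z‖ < 1} := by
  have hB := differentiableOn_annulusBlaschkeFactor hr0 hr1 hp
  obtain ⟨C, hC⟩ := exists_norm_annulusBlaschkeFactor_mul_neg_sub_one_le hr0 hr1 hp
  have htail := Summable.hasProdUniformlyOn_nat_one_add (isCompact_closedAnnulus r)
    ((summable_geometric_of_lt_one (by positivity) (by nlinarith)).mul_left C)
    (Eventually.of_forall hC)
    fun n => ((hB _).mul (hB _)).continuousOn.sub continuousOn_const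
  obtain ⟨M, hM⟩ := (isCompact_closedAnnulus r).exists_bound_of_continuousOn <|
    ((differentiableOn_zpow (-δ) _ (Or.inl (zero_notMem_closedAnnulus hr0))).mul
      (hB 0)).continuousOn
  have hlim := (htail.tendstoUniformlyOn_finsetRange.mul_left_of_norm_le hM).congr <|
    Eventually.of_forall fun N z _ => (annulusPartialProduct_eq_mul_prod_range r p δ N z).symm
  have hf := differentiableOn_annulusPartialProduct hr0 hr1 hp δ
  refine ⟨_, hlim, hlim.continuousOn (Frequently.of_forall fun N => (hf N).continuousOn), ?_⟩
  have hsub : {z : ℂ | r < ‖z‖ ∧ ‖z‖ < 1} ⊆ closedAnnulus r := fun z hz => ⟨hz.1.le, hz.2.le⟩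
  exact (hlim.mono hsub).tendstoLocallyUniformlyOn.differentiableOn
    (Eventually.of_forall fun N => (hf N).mono hsub)
    ((isOpen_lt continuous_const continuous_norm).inter
      (isOpen_lt continuous_norm continuous_const))

/-- For `0 < r < 1`, an integer `δ`, and points
`p₁, …, p_e ∈ 𝔸_r` (`e ≥ 2`), the partial products `f_N` converge uniformly on
the closed annulus `{r ≤ |z| ≤ 1}` to a limit `f_∞` which is continuous there
and holomorphic on the open annulus `𝔸_r = {r < |z| < 1}`. -/
theorem annulusPartialProduct_tendstoUniformly (r : ℝ) (hr0 : 0 < r) (hr1 : r < 1)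
    (e : ℕ) (he : 2 ≤ e) (p : Fin e → ℂ)
    (hp : ∀ k, r < ‖p k‖ ∧ ‖p k‖ < 1) (δ : ℤ) :
    ∃ finf : ℂ → ℂ,
      TendstoUniformlyOn (fun N z => annulusPartialProduct r p δ N z) finf atTop
        {z : ℂ | r ≤ ‖z‖ ∧ ‖z‖ ≤ 1} ∧
      ContinuousOn finf {z : ℂ | r ≤ ‖z‖ ∧ ‖z‖ ≤ 1} ∧
      DifferentiableOn ℂ finf {z : ℂ | r < ‖z‖ ∧ ‖z‖ < 1} :=
  annulusPartialProduct_tendstoUniformly_general r hr0 hr1 e p hp δ
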